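/- arXiv:2404.10424 — 7 statements merged into one kernel-verified Lean document; each statement's English description precedes it below -/
import Mathlib

section
/- For positive integers c dividing d and a finitely generated free R_d-module V, the map pr_{c,d}(Z) = Σ_{k=0}^{d/c-1} N^k Z N^{d/c-1-k} satisfies ⟨pr_{c,d}(Z), Z'⟩_d = ⟨Z, Z'⟩_c for all Z ∈ End_{R_c}(V) and Z' ∈ End_{R_d}(V), i.e. pr_{c,d} is the transpose of the inclusion End_{R_d}(V) ↪ End_{R_c}(V) with respect to the residue-trace pairings. -/
open Polynomial Finset

/-- The truncated polynomial ring `R_d = ℂ[ε]/(ε^d)`. -/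
abbrev Rmod (d : ℕ) : Type := AdjoinRoot (X ^ d : ℂ[X])

/-- The class of the variable `ε` in `R_d`. -/
noncomputable def eps (d : ℕ) : Rmod d := AdjoinRoot.root _

/-- The coefficient of `ε^k` of (the canonical representative of) an element of `R_d`. -/
noncomputable def coeffD (d : ℕ) (k : ℕ) (f : Rmod d) : ℂ :=
  (AdjoinRoot.modByMonicHom (monic_X_pow d) f).coeff k

/-- The residue `res_{ε=0}(f dε/ε^d)`, i.e. the coefficient of `ε^{d-1}`. -/
noncomputable def res (d : ℕ) (f : Rmod d) : ℂ := coeffD d (d - 1) f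

/-! The pairing identity is a reindexing: `Z'` commutes with powers of `ε_d`, multiplying by
`ε_d^k` shifts coefficients by `k`, and the reflection `k ↦ d/c - 1 - k` of the summation
index matches the residue index `d - 1` of `R_d` with the index `k + (c - 1)(d/c)` of the
`R_c`-residue, since `c · (d/c) = d`. -/

lemma map_pow_smul_of_map_smul {A M N : Type*} [Monoid A] [MulAction A M] [MulAction A N]
    {f : M → N} {a : A} (hf : ∀ v, f (a • v) = a • f v) (k : ℕ) (v : M) :
    f (a ^ k • v) = a ^ k • f v := by
  induction k generalizing v with
  | zero => simp
  | succ k ih => rw [pow_succ, mul_smul, mul_smul, ih, hf]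

lemma coeffD_mk {d j : ℕ} (hj : j < d) (p : ℂ[X]) :
    coeffD d j (AdjoinRoot.mk _ p) = p.coeff j := by
  rw [coeffD, AdjoinRoot.modByMonicHom_mk, modByMonic_eq_sub_mul_div _ (X ^ d),
    coeff_sub, mul_comm, coeff_mul_X_pow', if_neg (by omega), sub_zero]

lemma coeffD_eps_pow_mul {d j k : ℕ} (hk : k ≤ j) (hj : j < d) (x : Rmod d) :
    coeffD d j (eps d ^ k * x) = coeffD d (j - k) x := by
  obtain ⟨p, rfl⟩ := AdjoinRoot.mk_surjective x
  have hmk : eps d ^ k * AdjoinRoot.mk _ p = AdjoinRoot.mk _ (X ^ k * p) := by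
    rw [map_mul, map_pow]; rfl
  rw [hmk, coeffD_mk hj, coeffD_mk (by omega), mul_comm, coeff_mul_X_pow', if_pos hk]

lemma coeffD_sum {ι : Type*} (s : Finset ι) (d j : ℕ) (f : ι → Rmod d) :
    coeffD d j (∑ k ∈ s, f k) = ∑ k ∈ s, coeffD d j (f k) := by
  simp only [coeffD, map_sum, finsetSum_coeff]

theorem stmt2_general (c d n : ℕ) (hcd : c ∣ d)
    (Z Z' : (Fin n → Rmod d) →ₗ[ℂ] (Fin n → Rmod d))
    (hZ' : ∀ v, Z' (eps d • v) = eps d • Z' v) :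
    -- `⟨pr_{c,d}(Z), Z'⟩_d` :
    (∑ i : Fin n, coeffD d (d - 1)
        ((∑ k ∈ Finset.range (d / c),
            eps d ^ k • Z (eps d ^ (d / c - 1 - k) • Z' ((Pi.single i 1 : Fin n → Rmod d)))) i))
    -- `⟨Z, Z'⟩_c` :
    = ∑ i : Fin n, ∑ k ∈ Finset.range (d / c),
        coeffD d (k + (c - 1) * (d / c))
          ((Z (Z' (eps d ^ k • (Pi.single i 1 : Fin n → Rmod d)))) i) := by
  obtain rfl | hd := Nat.eq_zero_or_pos d
  · simp [coeffD]
  set m := d / c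
  have hmd : m ≤ d := Nat.div_le_self d c
  have hcm : (c - 1) * m = d - m := by rw [Nat.sub_one_mul, Nat.mul_div_cancel' hcd]
  refine sum_congr rfl fun i _ => ?_
  rw [Finset.sum_apply, coeffD_sum]
  conv_rhs => rw [← sum_range_reflect]
  refine sum_congr rfl fun k hk => ?_
  rw [mem_range] at hk
  rw [map_pow_smul_of_map_smul hZ', Pi.smul_apply, smul_eq_mul,
    coeffD_eps_pow_mul (by omega) (by omega)]
  congr 1
  omega

/-- for `c ∣ d` and the free `R_d`-module `V = R_d^n`,
`⟨pr_{c,d}(Z), Z'⟩_d = ⟨Z, Z'⟩_c` for every `R_c`-linear endomorphism `Z` of `V`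
and every `R_d`-linear endomorphism `Z'` of `V`.  Here `Z` being `R_c`-linear is
expressed as: `Z` is `ℂ`-linear and commutes with multiplication by
`ε_c = ε_d^{d/c}`; similarly for `Z'`.  The pairing `⟨X,Y⟩_e` is the residue of
the `R_e`-trace of `XY`, computed with respect to the standard bases:
`tr_{R_d}` has diagonal entries `(f (e_i)) i` and `tr_{R_c}` has diagonal
entries indexed by the basis `ε_d^k e_i` (`0 ≤ k < d/c`), and the residues pick
the coefficients of `ε_d^{d-1}`, resp. `ε_c^{c-1}`. -/
theorem stmt2 (c d n : ℕ) (hc : 0 < c) (hcd : c ∣ d)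
    (Z Z' : (Fin n → Rmod d) →ₗ[ℂ] (Fin n → Rmod d))
    (hZ : ∀ v, Z (eps d ^ (d / c) • v) = eps d ^ (d / c) • Z v)
    (hZ' : ∀ v, Z' (eps d • v) = eps d • Z' v) :
    -- `⟨pr_{c,d}(Z), Z'⟩_d` :
    (∑ i : Fin n, coeffD d (d - 1)
        ((∑ k ∈ Finset.range (d / c),
            eps d ^ k • Z (eps d ^ (d / c - 1 - k) • Z' ((Pi.single i 1 : Fin n → Rmod d)))) i))
    -- `⟨Z, Z'⟩_c` :
    = ∑ i : Fin n, ∑ k ∈ Finset.range (d / c),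
        coeffD d (k + (c - 1) * (d / c))
          ((Z (Z' (eps d ^ k • (Pi.single i 1 : Fin n → Rmod d)))) i) :=
  stmt2_general c d n hcd Z Z' hZ'
end

section
/- Let ℬ be data of linear maps B_{i+1,i}: V_i⊗R_d → V_{i+1}⊗R_d and B_{i,i+1}: V_{i+1}⊗R_d → V_i⊗R_d (R_d-linear, for i = 0,…,l-1, with V_0 = V) satisfying the moment map relations B_{i,i-1}B_{i-1,i} - B_{i,i+1}B_{i+1,i} = -λ_i Id for i = 1,…,l (with B_{l,l+1} = B_{l+1,l} = 0), where λ_i = θ_i - θ_{i-1} for elements θ_0,…,θ_l ∈ R_d with θ_i - θ_j a unit for i ≠ j. Set A := -B_{0,1}B_{1,0} + θ_0 Id and B_{0,i} := B_{0,1}⋯B_{i-1,i}. Then (-A + θ_i Id) B_{0,i} = B_{0,i+1} B_{i+1,i} for i = 0,…,l-1, and (-A + θ_l Id) B_{0,l} = 0; consequently ∏_{j=0}^{l}(-A + θ_j Id) = 0. -/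
open Polynomial Finset

/-!
Put `A = θ₀ - B_{0,1}B_{1,0}`. The identity `(θ_i - A) B_{0,i} = B_{0,i+1} B_{i+1,i}` follows by
induction on `i`: the difference between the cases `i + 1` and `i` is `(θ_{i+1} - θ_i) B_{0,i+1}`,
and the moment map relation at the vertex `i + 1` turns `B_{0,i+1}(B_{i+1,i}B_{i,i+1} + λ_{i+1})`
into `B_{0,i+2}B_{i+2,i+1}`. Applying these identities successively,
`∏_{j<n} (θ_j - A) = B_{0,n} B_{n,n-1} ⋯ B_{1,0}`, which vanishes for `n = l + 1` since `B_{l+1,l} = 0`.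
-/

section LegRelations

variable {R : Type*} [CommRing R] {M : ℕ → Type*} [∀ i, AddCommGroup (M i)] [∀ i, Module R (M i)]

def upPath (Bup : ∀ i, M i →ₗ[R] M (i + 1)) : ∀ i, M 0 →ₗ[R] M i
  | 0 => LinearMap.id
  | i + 1 => Bup i ∘ₗ upPath Bup i

theorem smul_id_sub_comp_eq_comp_of_moment (l : ℕ) (θ : ℕ → R)
    (Bup : ∀ i, M i →ₗ[R] M (i + 1)) (Bdn : ∀ i, M (i + 1) →ₗ[R] M i)
    (hmom : ∀ i, i + 1 ≤ l →
      Bup i ∘ₗ Bdn i - Bdn (i + 1) ∘ₗ Bup (i + 1) = -((θ (i + 1) - θ i) • LinearMap.id))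
    (B0 : ∀ i, M i →ₗ[R] M 0) (hB00 : B0 0 = LinearMap.id)
    (hB0succ : ∀ i, B0 (i + 1) = B0 i ∘ₗ Bdn i) :
    ∀ i ≤ l, (θ i • LinearMap.id - (θ 0 • LinearMap.id - Bdn 0 ∘ₗ Bup 0)) ∘ₗ B0 i
      = B0 (i + 1) ∘ₗ Bup i := by
  set A : M 0 →ₗ[R] M 0 := θ 0 • LinearMap.id - Bdn 0 ∘ₗ Bup 0
  intro i
  induction i with
  | zero =>
    intro _
    rw [hB0succ 0, hB00, LinearMap.comp_id, LinearMap.id_comp, sub_sub_cancel]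
  | succ i ih =>
    intro hi
    have hup : Bup i ∘ₗ Bdn i = Bdn (i + 1) ∘ₗ Bup (i + 1) - (θ (i + 1) - θ i) • LinearMap.id := by
      rw [← sub_eq_zero, ← sub_add, hmom i hi, neg_add_cancel]
    calc (θ (i + 1) • LinearMap.id - A) ∘ₗ B0 (i + 1)
        = (θ i • LinearMap.id - A) ∘ₗ B0 i ∘ₗ Bdn i + (θ (i + 1) - θ i) • B0 (i + 1) := by
          rw [← hB0succ]
          ext x
          simp only [LinearMap.add_apply, LinearMap.sub_apply, LinearMap.comp_apply,
            LinearMap.smul_apply, LinearMap.id_apply, sub_smul]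
          abel
      _ = B0 (i + 1) ∘ₗ (Bup i ∘ₗ Bdn i) + (θ (i + 1) - θ i) • B0 (i + 1) := by
          rw [← LinearMap.comp_assoc, ih (Nat.le_of_succ_le hi), LinearMap.comp_assoc]
      _ = B0 (i + 2) ∘ₗ Bup (i + 1) := by
          rw [hup, LinearMap.comp_sub, LinearMap.comp_smul, LinearMap.comp_id, sub_add_cancel,
            hB0succ (i + 1), LinearMap.comp_assoc]

theorem aeval_prod_eq_comp_upPath (A : Module.End R (M 0)) (θ : ℕ → R)
    (Bup : ∀ i, M i →ₗ[R] M (i + 1)) (B0 : ∀ i, M i →ₗ[R] M 0) (hB00 : B0 0 = LinearMap.id)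
    (n : ℕ) (hstep : ∀ i < n, (θ i • LinearMap.id - A) ∘ₗ B0 i = B0 (i + 1) ∘ₗ Bup i) :
    aeval A (∏ j ∈ range n, (C (θ j) - X)) = B0 n ∘ₗ upPath Bup n := by
  induction n with
  | zero => simp [hB00, upPath, Module.End.one_eq_id]
  | succ n ih =>
    rw [prod_range_succ, mul_comm, map_mul, ih fun i hi => hstep i (hi.trans n.lt_succ_self),
      Module.End.mul_eq_comp, map_sub, aeval_C, aeval_X, Module.algebraMap_end_eq_smul_id,
      ← LinearMap.comp_assoc, hstep n n.lt_succ_self, LinearMap.comp_assoc, upPath]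

end LegRelations

theorem stmt9_general (d l : ℕ)
    (v : ℕ → ℕ)
    (θ : ℕ → Rmod d)
    (Bup : ∀ i : ℕ, (Fin (v i) → Rmod d) →ₗ[Rmod d] (Fin (v (i + 1)) → Rmod d))
    (Bdn : ∀ i : ℕ, (Fin (v (i + 1)) → Rmod d) →ₗ[Rmod d] (Fin (v i) → Rmod d))
    (hBupl : Bup l = 0)
    (hmom : ∀ i : ℕ, i + 1 ≤ l →
      Bup i ∘ₗ Bdn i - Bdn (i + 1) ∘ₗ Bup (i + 1)
        = -((θ (i + 1) - θ i) • LinearMap.id))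
    (B0 : ∀ i : ℕ, (Fin (v i) → Rmod d) →ₗ[Rmod d] (Fin (v 0) → Rmod d))
    (hB00 : B0 0 = LinearMap.id)
    (hB0succ : ∀ i : ℕ, B0 (i + 1) = B0 i ∘ₗ Bdn i) :
    (∀ i : ℕ, i < l →
        (θ i • LinearMap.id - (θ 0 • LinearMap.id - Bdn 0 ∘ₗ Bup 0)) ∘ₗ B0 i
          = B0 (i + 1) ∘ₗ Bup i)
    ∧ ((θ l • LinearMap.id - (θ 0 • LinearMap.id - Bdn 0 ∘ₗ Bup 0)) ∘ₗ B0 l = 0)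
    ∧ Polynomial.aeval
        ((θ 0 • LinearMap.id - Bdn 0 ∘ₗ Bup 0) :
          Module.End (Rmod d) (Fin (v 0) → Rmod d))
        (∏ j ∈ Finset.range (l + 1), (C (θ j) - X)) = 0 := by
  have key := smul_id_sub_comp_eq_comp_of_moment (M := fun i => Fin (v i) → Rmod d)
    l θ Bup Bdn hmom B0 hB00 hB0succ
  refine ⟨fun i hi => key i hi.le, by rw [key l le_rfl, hBupl, LinearMap.comp_zero], ?_⟩
  rw [aeval_prod_eq_comp_upPath _ θ Bup B0 hB00 (l + 1) fun i hi => key i (Nat.lt_succ_iff.mp hi),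
    upPath, hBupl, LinearMap.zero_comp, LinearMap.comp_zero]

/-- leg moment-map relations.  Given `R_d`-linear maps
`Bup i = B_{i+1,i} : V_i ⊗ R_d → V_{i+1} ⊗ R_d` and
`Bdn i = B_{i,i+1} : V_{i+1} ⊗ R_d → V_i ⊗ R_d` (with `V_0 = V`, `V_i = R_d^{v i}`)
satisfying `B_{i,i-1}B_{i-1,i} - B_{i,i+1}B_{i+1,i} = -λ_i Id` for `1 ≤ i ≤ l`
(`λ_i = θ_i - θ_{i-1}`, `B_{l,l+1} = B_{l+1,l} = 0`), and setting
`A = -B_{0,1}B_{1,0} + θ_0 Id` and `B_{0,i} = B_{0,1} ⋯ B_{i-1,i}`, one has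
`(-A + θ_i Id) B_{0,i} = B_{0,i+1} B_{i+1,i}` for `0 ≤ i < l`,
`(-A + θ_l Id) B_{0,l} = 0`, and consequently `∏_{j=0}^{l} (-A + θ_j Id) = 0`. -/
theorem stmt9 (d l : ℕ) (hd : 0 < d) (hl : 0 < l)
    (v : ℕ → ℕ)
    (θ : ℕ → Rmod d)
    (hθ : ∀ i j, i ≤ l → j ≤ l → i ≠ j → IsUnit (θ i - θ j))
    (Bup : ∀ i : ℕ, (Fin (v i) → Rmod d) →ₗ[Rmod d] (Fin (v (i + 1)) → Rmod d))
    (Bdn : ∀ i : ℕ, (Fin (v (i + 1)) → Rmod d) →ₗ[Rmod d] (Fin (v i) → Rmod d))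
    (hBupl : Bup l = 0) (hBdnl : Bdn l = 0)
    (hmom : ∀ i : ℕ, i + 1 ≤ l →
      Bup i ∘ₗ Bdn i - Bdn (i + 1) ∘ₗ Bup (i + 1)
        = -((θ (i + 1) - θ i) • LinearMap.id))
    (B0 : ∀ i : ℕ, (Fin (v i) → Rmod d) →ₗ[Rmod d] (Fin (v 0) → Rmod d))
    (hB00 : B0 0 = LinearMap.id)
    (hB0succ : ∀ i : ℕ, B0 (i + 1) = B0 i ∘ₗ Bdn i) :
    (∀ i : ℕ, i < l →
        (θ i • LinearMap.id - (θ 0 • LinearMap.id - Bdn 0 ∘ₗ Bup 0)) ∘ₗ B0 i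
          = B0 (i + 1) ∘ₗ Bup i)
    ∧ ((θ l • LinearMap.id - (θ 0 • LinearMap.id - Bdn 0 ∘ₗ Bup 0)) ∘ₗ B0 l = 0)
    ∧ Polynomial.aeval
        ((θ 0 • LinearMap.id - Bdn 0 ∘ₗ Bup 0) :
          Module.End (Rmod d) (Fin (v 0) → Rmod d))
        (∏ j ∈ Finset.range (l + 1), (C (θ j) - X)) = 0 :=
  stmt9_general d l v θ Bup Bdn hBupl hmom B0 hB00 hB0succ
end

section
/- In the setting of the leg moment-map relations (previous item), for each i = 0,…,l-1 one has B_{0,i+1}B_{i+1,0} = ∏_{j=0}^{i}(-A + θ_j Id), where B_{i,0} := B_{i,i-1}⋯B_{2,1}B_{1,0} and A = -B_{0,1}B_{1,0} + θ_0 Id. -/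
/-!
Write `M_i = B_{i,i+1} B_{i+1,i}`. The moment-map relation says
`M_{i+1} = B_{i+1,i} B_{i,i+1} + (θ_{i+1} - θ_i)`, so a polynomial `q(M_{i+1})` sandwiched between
`B_{i,i+1}` and `B_{i+1,i}` becomes `M_i · q(M_i + θ_{i+1} - θ_i)`. Since `M_0 = θ_0 - A`, induction
on `i` gives `B_{0,i} q(M_i) B_{i,0} = ∏_{j<i} (θ_j - A) · q(θ_i - A)`; take `q = 1`.
-/

open Polynomial Finset

namespace LinearMap

variable {R M N : Type*} [CommSemiring R] [AddCommMonoid M] [Module R M]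
  [AddCommMonoid N] [Module R N]

theorem aeval_comp_eq_comp_aeval {f : M →ₗ[R] N} {g : Module.End R M} {g₂ : Module.End R N}
    (h : g₂ ∘ₗ f = f ∘ₗ g) (p : R[X]) : aeval g₂ p ∘ₗ f = f ∘ₗ aeval g p := by
  induction p using Polynomial.induction_on' with
  | add p q hp hq => simp only [map_add, add_comp, comp_add, hp, hq]
  | monomial n a =>
    simp only [aeval_monomial, Module.algebraMap_end_eq_smul_id, Module.End.mul_eq_comp,
      smul_comp, comp_smul, id_comp, Module.End.commute_pow_left_of_commute h]

theorem comp_aeval_add_smul_id_comp (f : M →ₗ[R] N) (g : N →ₗ[R] M) (c : R) (q : R[X]) :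
    g ∘ₗ aeval (f ∘ₗ g + c • LinearMap.id : Module.End R N) q ∘ₗ f
      = aeval (g ∘ₗ f : Module.End R M) (q.comp (X + C c) * X) := by
  have shift : aeval (f ∘ₗ g + c • LinearMap.id : Module.End R N) q
      = aeval (f ∘ₗ g : Module.End R N) (q.comp (X + C c)) := by
    rw [aeval_comp, map_add, aeval_X, aeval_C, Module.algebraMap_end_eq_smul_id]
  have slide : (g ∘ₗ f) ∘ₗ g = g ∘ₗ (f ∘ₗ g) := comp_assoc _ _ _
  rw [shift, ← comp_assoc, ← aeval_comp_eq_comp_aeval slide, comp_assoc, map_mul, aeval_X,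
    Module.End.mul_eq_comp]

end LinearMap

theorem Polynomial.comp_X_add_C_sub_mul_X_comp {R : Type*} [CommRing R] (q : R[X]) (a b : R) :
    (q.comp (X + C (b - a)) * X).comp (C a - X) = (C a - X) * q.comp (C b - X) := by
  rw [mul_comp, X_comp, comp_assoc, add_comp, X_comp, C_comp, C_sub, mul_comm]
  congr 2
  ring

section LegChain

open LinearMap (comp_id id_comp)

variable {R : Type*} [CommRing R] {V : ℕ → Type*} [∀ i, AddCommGroup (V i)]
  [∀ i, Module R (V i)] (θ : ℕ → R) (Bup : ∀ i, V i →ₗ[R] V (i + 1))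
  (Bdn : ∀ i, V (i + 1) →ₗ[R] V i) (B0 : ∀ i, V i →ₗ[R] V 0) (Bto : ∀ i, V 0 →ₗ[R] V i)

theorem comp_aeval_comp_eq_aeval_prod {l : ℕ}
    (hmom : ∀ i < l,
      Bdn (i + 1) ∘ₗ Bup (i + 1) = Bup i ∘ₗ Bdn i + (θ (i + 1) - θ i) • LinearMap.id)
    (hB00 : B0 0 = LinearMap.id) (hB0succ : ∀ i, B0 (i + 1) = B0 i ∘ₗ Bdn i)
    (hBto0 : Bto 0 = LinearMap.id) (hBtosucc : ∀ i, Bto (i + 1) = Bup i ∘ₗ Bto i) :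
    ∀ i ≤ l, ∀ q : R[X],
      B0 i ∘ₗ aeval (Bdn i ∘ₗ Bup i : Module.End R (V i)) q ∘ₗ Bto i
        = aeval (θ 0 • LinearMap.id - Bdn 0 ∘ₗ Bup 0 : Module.End R (V 0))
            ((∏ j ∈ range i, (C (θ j) - X)) * q.comp (C (θ i) - X)) := by
  intro i
  induction i with
  | zero =>
    intro _ q
    have hM0 : aeval (θ 0 • LinearMap.id - Bdn 0 ∘ₗ Bup 0 : Module.End R (V 0)) (C (θ 0) - X)
        = Bdn 0 ∘ₗ Bup 0 := by
      rw [map_sub, aeval_C, aeval_X, Module.algebraMap_end_eq_smul_id, sub_sub_cancel]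
    rw [hB00, hBto0, comp_id, id_comp, range_zero, prod_empty, one_mul, aeval_comp, hM0]
  | succ k ih =>
    intro hk q
    calc B0 (k + 1) ∘ₗ aeval (Bdn (k + 1) ∘ₗ Bup (k + 1) : Module.End R (V (k + 1))) q
          ∘ₗ Bto (k + 1)
        = B0 k ∘ₗ (Bdn k ∘ₗ aeval (Bup k ∘ₗ Bdn k + (θ (k + 1) - θ k) • LinearMap.id) q
            ∘ₗ Bup k) ∘ₗ Bto k := by
          simp only [hB0succ, hBtosucc, hmom k hk, LinearMap.comp_assoc]
      _ = B0 k ∘ₗ aeval (Bdn k ∘ₗ Bup k : Module.End R (V k))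
            (q.comp (X + C (θ (k + 1) - θ k)) * X) ∘ₗ Bto k := by
          rw [LinearMap.comp_aeval_add_smul_id_comp]
      _ = _ := by
          rw [ih (Nat.le_of_succ_le hk), comp_X_add_C_sub_mul_X_comp, prod_range_succ, mul_assoc]

end LegChain

theorem stmt10_general (d l : ℕ)
    (v : ℕ → ℕ)
    (θ : ℕ → Rmod d)
    (Bup : ∀ i : ℕ, (Fin (v i) → Rmod d) →ₗ[Rmod d] (Fin (v (i + 1)) → Rmod d))
    (Bdn : ∀ i : ℕ, (Fin (v (i + 1)) → Rmod d) →ₗ[Rmod d] (Fin (v i) → Rmod d))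
    (hmom : ∀ i : ℕ, i + 1 ≤ l →
      Bup i ∘ₗ Bdn i - Bdn (i + 1) ∘ₗ Bup (i + 1)
        = -((θ (i + 1) - θ i) • LinearMap.id))
    (B0 : ∀ i : ℕ, (Fin (v i) → Rmod d) →ₗ[Rmod d] (Fin (v 0) → Rmod d))
    (hB00 : B0 0 = LinearMap.id)
    (hB0succ : ∀ i : ℕ, B0 (i + 1) = B0 i ∘ₗ Bdn i)
    (Bto : ∀ i : ℕ, (Fin (v 0) → Rmod d) →ₗ[Rmod d] (Fin (v i) → Rmod d))
    (hBto0 : Bto 0 = LinearMap.id)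
    (hBtosucc : ∀ i : ℕ, Bto (i + 1) = Bup i ∘ₗ Bto i) :
    ∀ i : ℕ, i < l →
      B0 (i + 1) ∘ₗ Bto (i + 1)
        = Polynomial.aeval
            ((θ 0 • LinearMap.id - Bdn 0 ∘ₗ Bup 0) :
              Module.End (Rmod d) (Fin (v 0) → Rmod d))
            (∏ j ∈ Finset.range (i + 1), (C (θ j) - X)) := by
  intro i hi
  have hM : ∀ i < l, Bdn (i + 1) ∘ₗ Bup (i + 1)
      = Bup i ∘ₗ Bdn i + (θ (i + 1) - θ i) • LinearMap.id := fun i hi => by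
    rw [← sub_sub_cancel (Bup i ∘ₗ Bdn i) (Bdn (i + 1) ∘ₗ Bup (i + 1)), hmom i hi,
      sub_neg_eq_add]
  have h := comp_aeval_comp_eq_aeval_prod (V := fun i => Fin (v i) → Rmod d) θ Bup Bdn B0 Bto
    hM hB00 hB0succ hBto0 hBtosucc (i + 1) hi 1
  rwa [map_one, Module.End.one_eq_id, LinearMap.id_comp, one_comp, mul_one] at h

/-- in the setting of the leg moment-map relations, with
`B_{0,i} = B_{0,1} ⋯ B_{i-1,i}`, `B_{i,0} = B_{i,i-1} ⋯ B_{1,0}` and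
`A = -B_{0,1}B_{1,0} + θ_0 Id`, one has
`B_{0,i+1} B_{i+1,0} = ∏_{j=0}^{i} (-A + θ_j Id)` for each `i = 0,…,l-1`. -/
theorem stmt10 (d l : ℕ) (hd : 0 < d) (hl : 0 < l)
    (v : ℕ → ℕ)
    (θ : ℕ → Rmod d)
    (hθ : ∀ i j, i ≤ l → j ≤ l → i ≠ j → IsUnit (θ i - θ j))
    (Bup : ∀ i : ℕ, (Fin (v i) → Rmod d) →ₗ[Rmod d] (Fin (v (i + 1)) → Rmod d))
    (Bdn : ∀ i : ℕ, (Fin (v (i + 1)) → Rmod d) →ₗ[Rmod d] (Fin (v i) → Rmod d))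
    (hBupl : Bup l = 0) (hBdnl : Bdn l = 0)
    (hmom : ∀ i : ℕ, i + 1 ≤ l →
      Bup i ∘ₗ Bdn i - Bdn (i + 1) ∘ₗ Bup (i + 1)
        = -((θ (i + 1) - θ i) • LinearMap.id))
    (B0 : ∀ i : ℕ, (Fin (v i) → Rmod d) →ₗ[Rmod d] (Fin (v 0) → Rmod d))
    (hB00 : B0 0 = LinearMap.id)
    (hB0succ : ∀ i : ℕ, B0 (i + 1) = B0 i ∘ₗ Bdn i)
    (Bto : ∀ i : ℕ, (Fin (v 0) → Rmod d) →ₗ[Rmod d] (Fin (v i) → Rmod d))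
    (hBto0 : Bto 0 = LinearMap.id)
    (hBtosucc : ∀ i : ℕ, Bto (i + 1) = Bup i ∘ₗ Bto i) :
    ∀ i : ℕ, i < l →
      B0 (i + 1) ∘ₗ Bto (i + 1)
        = Polynomial.aeval
            ((θ 0 • LinearMap.id - Bdn 0 ∘ₗ Bup 0) :
              Module.End (Rmod d) (Fin (v 0) → Rmod d))
            (∏ j ∈ Finset.range (i + 1), (C (θ j) - X)) :=
  stmt10_general d l v θ Bup Bdn hmom B0 hB00 hB0succ Bto hBto0 hBtosucc
end

section
/- Fix a symmetrizable generalized Cartan matrix 𝐂 = (c_{ij})_{i,j∈I} with symmetrizer D = diag(d_i), d_{ij} = gcd(d_i,d_j), f_{ij} = d_j/d_{ij}. Define Ĩ = {(i,k) : i ∈ I, 0 ≤ k < d_i} and the Ĩ×Ĩ matrix 𝐂̃ with entries c̃_{(i,k)(j,l)} = c_{ij} if k = f_{ji}m and l = f_{ij}m for some integer m, and 0 otherwise. Then 𝐂̃ is a symmetrizable generalized Cartan matrix with symmetrizer diag(d̃_{(i,k)}) where d̃_{(i,k)} = d_i. -/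
lemma eq_zero_iff_eq_zero_of_mul_eq_mul {M₀ : Type*} [MulZeroClass M₀] [NoZeroDivisors M₀]
    {a b x y : M₀} (ha : a ≠ 0) (hb : b ≠ 0) (h : a * x = b * y) : x = 0 ↔ y = 0 := by
  constructor
  · rintro rfl
    exact (mul_eq_zero.mp (h.symm.trans (mul_zero a))).resolve_left hb
  · rintro rfl
    exact (mul_eq_zero.mp (h.trans (mul_zero b))).resolve_left ha

section Linked

variable {I : Type} (d : I → ℕ)

/-- `c̃_{(i,k)(j,l)} = c_{ij}` exactly when `Linked d i j k l`; `d i / gcd (d j) (d i)` is `f_{ji}`. -/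
def Linked (i j : I) (k l : ℕ) : Prop :=
  ∃ m : ℕ, k = (d i / Nat.gcd (d j) (d i)) * m ∧ l = (d j / Nat.gcd (d i) (d j)) * m

variable {d}

lemma linked_comm {i j : I} {k l : ℕ} : Linked d i j k l ↔ Linked d j i l k :=
  exists_congr fun _ => and_comm

lemma linked_self_iff {i : I} (hd : 0 < d i) {k l : ℕ} : Linked d i i k l ↔ k = l := by
  simp only [Linked, Nat.gcd_self, Nat.div_self hd, one_mul]
  exact ⟨fun ⟨_, hk, hl⟩ => hk.trans hl.symm, fun h => ⟨k, rfl, h.symm⟩⟩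

end Linked

theorem stmt13_general {I : Type}
    (C : I → I → ℤ) (d : I → ℕ) (hd : ∀ i, 0 < d i)
    (hC2 : ∀ i, C i i = 2) (hCneg : ∀ i j, i ≠ j → C i j ≤ 0)
    (hsym : ∀ i j, (d i : ℤ) * C i j = (d j : ℤ) * C j i)
    (Ct : (Σ i : I, Fin (d i)) → (Σ i : I, Fin (d i)) → ℤ)
    (hCt1 : ∀ (i j : I) (k : Fin (d i)) (l : Fin (d j)),
      (∃ m : ℕ, (k : ℕ) = (d i / Nat.gcd (d j) (d i)) * m
          ∧ (l : ℕ) = (d j / Nat.gcd (d i) (d j)) * m) →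
      Ct ⟨i, k⟩ ⟨j, l⟩ = C i j)
    (hCt0 : ∀ (i j : I) (k : Fin (d i)) (l : Fin (d j)),
      ¬(∃ m : ℕ, (k : ℕ) = (d i / Nat.gcd (d j) (d i)) * m
          ∧ (l : ℕ) = (d j / Nat.gcd (d i) (d j)) * m) →
      Ct ⟨i, k⟩ ⟨j, l⟩ = 0) :
    (∀ x, Ct x x = 2)
    ∧ (∀ x y, x ≠ y → Ct x y ≤ 0)
    ∧ (∀ x y, Ct x y = 0 ↔ Ct y x = 0)
    ∧ (∀ (i j : I) (k : Fin (d i)) (l : Fin (d j)),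
        (d i : ℤ) * Ct ⟨i, k⟩ ⟨j, l⟩ = (d j : ℤ) * Ct ⟨j, l⟩ ⟨i, k⟩) := by
  classical
  have hCt : ∀ i j (k : Fin (d i)) (l : Fin (d j)),
      Ct ⟨i, k⟩ ⟨j, l⟩ = if Linked d i j k l then C i j else 0 := by
    intro i j k l
    split_ifs with h
    exacts [hCt1 i j k l h, hCt0 i j k l h]
  have hCt_swap : ∀ i j (k : Fin (d i)) (l : Fin (d j)),
      Ct ⟨j, l⟩ ⟨i, k⟩ = if Linked d i j k l then C j i else 0 := by
    intro i j k l
    simp only [hCt, ← linked_comm]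
  have hd₀ : ∀ i, (d i : ℤ) ≠ 0 := fun i => by exact_mod_cast (hd i).ne'
  refine ⟨?_, ?_, ?_, ?_⟩
  · rintro ⟨i, k⟩
    rw [hCt, if_pos ((linked_self_iff (hd i)).2 rfl), hC2]
  · rintro ⟨i, k⟩ ⟨j, l⟩ hne
    rw [hCt]
    split_ifs with h
    · obtain rfl | hij := eq_or_ne i j
      · exact absurd (by rw [Fin.ext ((linked_self_iff (hd i)).1 h)]) hne
      · exact hCneg i j hij
    · exact le_rfl
  · rintro ⟨i, k⟩ ⟨j, l⟩
    rw [hCt, hCt_swap]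
    split_ifs
    exacts [eq_zero_iff_eq_zero_of_mul_eq_mul (hd₀ i) (hd₀ j) (hsym i j), Iff.rfl]
  · intro i j k l
    rw [hCt, hCt_swap]
    split_ifs
    exacts [hsym i j, by rw [mul_zero, mul_zero]]

/-- given a symmetrizable GCM `𝐂` with symmetrizer `diag(d_i)`,
the matrix `𝐂̃` on `Ĩ = {(i,k) : i ∈ I, 0 ≤ k < d_i}` with
`c̃_{(i,k)(j,l)} = c_{ij}` if `k = f_{ji} m` and `l = f_{ij} m` for some `m`
(where `f_{ij} = d_j / gcd(d_i,d_j)`) and `c̃ = 0` otherwise, is again a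
symmetrizable generalized Cartan matrix, with symmetrizer `d̃_{(i,k)} = d_i`. -/
theorem stmt13 {I : Type} [Fintype I] [DecidableEq I]
    (C : I → I → ℤ) (d : I → ℕ) (hd : ∀ i, 0 < d i)
    (hC2 : ∀ i, C i i = 2) (hCneg : ∀ i j, i ≠ j → C i j ≤ 0)
    (hsym : ∀ i j, (d i : ℤ) * C i j = (d j : ℤ) * C j i)
    (Ct : (Σ i : I, Fin (d i)) → (Σ i : I, Fin (d i)) → ℤ)
    (hCt1 : ∀ (i j : I) (k : Fin (d i)) (l : Fin (d j)),
      (∃ m : ℕ, (k : ℕ) = (d i / Nat.gcd (d j) (d i)) * m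
          ∧ (l : ℕ) = (d j / Nat.gcd (d i) (d j)) * m) →
      Ct ⟨i, k⟩ ⟨j, l⟩ = C i j)
    (hCt0 : ∀ (i j : I) (k : Fin (d i)) (l : Fin (d j)),
      ¬(∃ m : ℕ, (k : ℕ) = (d i / Nat.gcd (d j) (d i)) * m
          ∧ (l : ℕ) = (d j / Nat.gcd (d i) (d j)) * m) →
      Ct ⟨i, k⟩ ⟨j, l⟩ = 0) :
    (∀ x, Ct x x = 2)
    ∧ (∀ x y, x ≠ y → Ct x y ≤ 0)
    ∧ (∀ x y, Ct x y = 0 ↔ Ct y x = 0)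
    ∧ (∀ (i j : I) (k : Fin (d i)) (l : Fin (d j)),
        (d i : ℤ) * Ct ⟨i, k⟩ ⟨j, l⟩ = (d j : ℤ) * Ct ⟨j, l⟩ ⟨i, k⟩) :=
  stmt13_general C d hd hC2 hCneg hsym Ct hCt1 hCt0
end

section
/- Fix a symmetrizable GCM 𝐂 with symmetrizer D. For each i ∈ I define the linear map r_i on R_𝐝 = ⊕_{j∈I} ℂ[ε_j]/(ε_j^{d_j}) by r_i(λ)_i = -λ_i and r_i(λ)_j = λ_j − Σ_{l=0}^{d_{ij}-1} λ_{i, d_i − (d_i/d_{ij})l − 1} c_{ij} ε_j^{d_j − (d_j/d_{ij})l − 1} for j ≠ i, where λ_i = Σ_k λ_{i,k} ε_i^k. Then the maps r_i satisfy the Coxeter relations of the Weyl group W(𝐂): r_i² = Id, and (r_i r_j)^{m_{ij}} = Id for i ≠ j, where m_{ij} = 2, 3, 4, 6 according as c_{ij}c_{ji} = 0, 1, 2, 3 (and no relation if c_{ij}c_{ji} ≥ 4). -/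
/-!
Put `F = r_i r_j`. Each `r_k` moves `λ` by a vector depending linearly on the block `λ_k`
alone, so `F` fixes every `λ` whose `i`- and `j`-blocks vanish; as
`(F - 1)(1 + F + ⋯ + F^{m-1}) = F^m - 1`, it suffices that `1 + F + ⋯ + F^{m-1}` kills the
`i`- and `j`-blocks. There the coefficients `λ_{i, d_i - 1 - (d_i/d_{ij}) l}` and
`λ_{j, d_j - 1 - (d_j/d_{ij}) l}` (`l < d_{ij}`) are matched in pairs, on which `F` acts by
`[[-1, c_{ji}], [-c_{ij}, c_{ij}c_{ji} - 1]]`. For `c_{ij}c_{ji} = 1, 2, 3` its characteristic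
polynomial `X² - (c_{ij}c_{ji} - 2)X + 1` is the cyclotomic polynomial `Φ_m`, which divides
`1 + X + ⋯ + X^{m-1}`; when `c_{ij}c_{ji} = 0` the symmetry of `a` forces `c_{ij} = c_{ji} = 0`
and the matrix is `-1`. On the unmatched coefficients `F = -1`, and these only exist when
`d_i ≠ d_j`, which rules out `c_{ij}c_{ji} = 1`, the only case with `m` odd.
-/

open Finset

/-- The reflection `r_i` acting on `R_𝐝 = ⊕_j ℂ[ε_j]/(ε_j^{d_j})`, written in
coordinates: an element `λ = (λ_j)` is recorded by its coefficients
`λ_{j,k}` (`0 ≤ k < d_j`).  One has `r_i(λ)_i = -λ_i` and, for `j ≠ i`,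
`r_i(λ)_j = λ_j - Σ_{l=0}^{d_{ij}-1} λ_{i, d_i - (d_i/d_{ij})l - 1} c_{ij}
ε_j^{d_j - (d_j/d_{ij})l - 1}`. -/
noncomputable def wrefl {I : Type} [DecidableEq I] (d : I → ℕ)
    (hd : ∀ i, 0 < d i) (c : I → I → ℤ) (i : I)
    (lam : ∀ j, Fin (d j) → ℂ) : ∀ j, Fin (d j) → ℂ :=
  fun j k =>
    if j = i then -lam j k
    else
      lam j k - ∑ l ∈ Finset.range (Nat.gcd (d i) (d j)),
        if (k : ℕ) = d j - 1 - (d j / Nat.gcd (d i) (d j)) * l then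
          (c i j : ℂ) *
            lam i ⟨d i - 1 - (d i / Nat.gcd (d i) (d j)) * l, by
              have := hd i; omega⟩
        else 0

theorem Nat.eq_of_sub_one_sub_mul_eq {n q G l l' : ℕ} (hn : q * G = n) (hq : 0 < q)
    (hl : l < G) (hl' : l' < G) (h : n - 1 - q * l = n - 1 - q * l') : l = l' := by
  have h₁ : q * (l + 1) ≤ q * G := Nat.mul_le_mul_left q hl
  have h₂ : q * (l' + 1) ≤ q * G := Nat.mul_le_mul_left q hl'
  rw [Nat.mul_add_one] at h₁ h₂
  exact Nat.eq_of_mul_eq_mul_left hq (by omega)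

theorem Nat.sub_one_sub_sub_one_sub_mul {n q G l : ℕ} (hn : q * G = n) (hq : 0 < q)
    (hl : l < G) : n - 1 - (n - 1 - q * l) = q * l := by
  have : q * (l + 1) ≤ q * G := Nat.mul_le_mul_left q hl
  rw [Nat.mul_add_one, hn] at this
  exact Nat.sub_sub_self (by omega)

theorem Nat.exists_lt_eq_sub_one_sub_mul {n q G k : ℕ} (hn : q * G = n) (hk : k < n)
    (hdvd : q ∣ n - 1 - k) : ∃ l < G, k = n - 1 - q * l := by
  obtain ⟨l, hl⟩ := hdvd
  refine ⟨l, Nat.lt_of_mul_lt_mul_left (a := q) (by omega), by omega⟩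

theorem Nat.div_gcd_pos_right {m n : ℕ} (hn : 0 < n) : 0 < n / Nat.gcd m n :=
  Nat.div_pos (Nat.gcd_le_right _ hn) (Nat.gcd_pos_of_pos_right _ hn)

theorem Finset.filter_range_sub_one_sub_mul_eq_singleton {n q G l₀ : ℕ} (hn : q * G = n)
    (hq : 0 < q) (hl₀ : l₀ < G) : {l ∈ range G | n - 1 - q * l₀ = n - 1 - q * l} = {l₀} := by
  ext l
  simp only [mem_filter, mem_range, mem_singleton]
  exact ⟨fun ⟨hl, h⟩ => (Nat.eq_of_sub_one_sub_mul_eq hn hq hl₀ hl h).symm,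
    fun h => ⟨h ▸ hl₀, h ▸ rfl⟩⟩

theorem Finset.filter_range_sub_one_sub_mul_eq_empty {n q G k : ℕ} (hn : q * G = n)
    (hq : 0 < q) (hk : ¬ q ∣ n - 1 - k) : {l ∈ range G | k = n - 1 - q * l} = ∅ := by
  refine filter_false_of_mem fun l hl h => hk ⟨l, ?_⟩
  rw [h, Nat.sub_one_sub_sub_one_sub_mul hn hq (mem_range.mp hl)]

theorem Module.End.pow_eq_one_of_geom_sum_apply_mem {R M : Type*} [Ring R] [AddCommGroup M]
    [Module R M] {f : Module.End R M} {m : ℕ} {K : Set M} (hfix : ∀ v ∈ K, f v = v)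
    (hsum : ∀ v, (∑ s ∈ range m, f ^ s) v ∈ K) : f ^ m = 1 := by
  ext v
  have h := LinearMap.congr_fun (mul_geom_sum f m) v
  rw [Module.End.mul_apply, LinearMap.sub_apply, hfix _ (hsum v)] at h
  exact (sub_eq_zero.mp (by simpa using h.symm))

theorem LinearMap.apply_geom_sum_eq_zero {R M N : Type*} [Semiring R] [AddCommMonoid M]
    [AddCommMonoid N] [Module R M] [Module R N] {f : Module.End R M} {f' : Module.End R N}
    {g : M →ₗ[R] N} (h : g ∘ₗ f = f' ∘ₗ g) {m : ℕ} (hf' : ∑ s ∈ Finset.range m, f' ^ s = 0)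
    (v : M) :
    g ((∑ s ∈ Finset.range m, f ^ s) v) = 0 := by
  have hpow (s : ℕ) : g ((f ^ s) v) = (f' ^ s) (g v) :=
    LinearMap.congr_fun (Module.End.commute_pow_left_of_commute h.symm s).symm v
  rw [LinearMap.sum_apply, map_sum]
  simp_rw [hpow]
  rw [← LinearMap.sum_apply, hf', LinearMap.zero_apply]

theorem geom_sum_eq_zero_of_sq_add_one_eq_zsmul {R : Type*} [Ring R] {x : R} {k : ℤ} {m : ℕ}
    (hkm : (k = -1 ∧ m = 3) ∨ (k = 0 ∧ m = 4) ∨ (k = 1 ∧ m = 6)) (hx : x ^ 2 + 1 = k • x) :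
    ∑ s ∈ range m, x ^ s = 0 := by
  rcases hkm with ⟨rfl, rfl⟩ | ⟨rfl, rfl⟩ | ⟨rfl, rfl⟩
  · calc _ = x ^ 2 + 1 + x := by simp only [sum_range_succ, sum_range_zero]; noncomm_ring
      _ = 0 := by rw [hx, neg_one_zsmul, neg_add_cancel]
  · calc _ = (1 + x) * (x ^ 2 + 1) := by simp only [sum_range_succ, sum_range_zero]; noncomm_ring
      _ = 0 := by rw [hx, zero_zsmul, mul_zero]
  · calc _ = (1 + x + x ^ 2) * ((1 + x) * (x ^ 2 + 1 - x)) := by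
          simp only [sum_range_succ, sum_range_zero]; noncomm_ring
      _ = 0 := by rw [hx, one_zsmul, sub_self, mul_zero, mul_zero]

/-- `r_i r_j` on a matched pair `(λ_{i,p}, λ_{j,q})` of coefficients, for `a = c_{ij}`,
`b = c_{ji}`. -/
noncomputable def rankTwoCoxeterElement (a b : ℤ) : Module.End ℂ (ℂ × ℂ) where
  toFun v := (-v.1 + b * v.2, -a * v.1 + (a * b - 1) * v.2)
  map_add' u v := by ext <;> simp <;> ring
  map_smul' z v := by ext <;> simp <;> ring

theorem rankTwoCoxeterElement_zero : rankTwoCoxeterElement 0 0 = -1 := by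
  ext <;> simp [rankTwoCoxeterElement]

theorem rankTwoCoxeterElement_sq_add_one (a b : ℤ) :
    rankTwoCoxeterElement a b ^ 2 + 1 = (a * b - 2) • rankTwoCoxeterElement a b := by
  ext <;> simp [rankTwoCoxeterElement, pow_two] <;> ring

theorem geom_sum_rankTwoCoxeterElement_eq_zero {a b : ℤ} {m : ℕ}
    (habm : (a = 0 ∧ b = 0 ∧ m = 2) ∨ (a * b = 1 ∧ m = 3) ∨ (a * b = 2 ∧ m = 4)
      ∨ (a * b = 3 ∧ m = 6)) :
    ∑ s ∈ range m, rankTwoCoxeterElement a b ^ s = 0 := by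
  rcases habm with ⟨rfl, rfl, rfl⟩ | habm
  · rw [rankTwoCoxeterElement_zero, neg_one_geom_sum, if_pos even_two]
  · refine geom_sum_eq_zero_of_sq_add_one_eq_zsmul ?_ (rankTwoCoxeterElement_sq_add_one a b)
    omega

def wreflIdx {n : ℕ} (hn : 0 < n) (q l : ℕ) : Fin n := ⟨n - 1 - q * l, by omega⟩

@[simp]
theorem coe_wreflIdx {n : ℕ} (hn : 0 < n) (q l : ℕ) :
    (wreflIdx hn q l : ℕ) = n - 1 - q * l :=
  rfl

def coeffₗ {I : Type} (d : I → ℕ) (k : I) (p : Fin (d k)) :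
    (∀ k, Fin (d k) → ℂ) →ₗ[ℂ] ℂ :=
  LinearMap.proj (φ := fun _ => ℂ) p ∘ₗ LinearMap.proj (φ := fun k => Fin (d k) → ℂ) k

@[simp]
theorem coeffₗ_apply {I : Type} (d : I → ℕ) (k : I) (p : Fin (d k))
    (v : ∀ k, Fin (d k) → ℂ) :
    coeffₗ d k p v = v k p :=
  rfl

section Reflection

variable {I : Type} [DecidableEq I] (d : I → ℕ) (hd : ∀ i, 0 < d i) (c : I → I → ℤ)

theorem wrefl_apply_self (i : I) (lam : ∀ j, Fin (d j) → ℂ) (k : Fin (d i)) :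
    wrefl d hd c i lam i k = -lam i k := by
  simp [wrefl]

theorem wrefl_apply_of_ne {i j : I} (h : j ≠ i) (lam : ∀ j, Fin (d j) → ℂ) (k : Fin (d j)) :
    wrefl d hd c i lam j k = lam j k - c i j * ∑ l ∈ range (Nat.gcd (d i) (d j))
      with (k : ℕ) = d j - 1 - d j / Nat.gcd (d i) (d j) * l,
        lam i (wreflIdx (hd i) (d i / Nat.gcd (d i) (d j)) l) := by
  simp only [wrefl, if_neg h, sum_filter, mul_sum, mul_ite, mul_zero]
  rfl

theorem wrefl_eq_self {i : I} {lam : ∀ j, Fin (d j) → ℂ} (h : lam i = 0) :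
    wrefl d hd c i lam = lam := by
  funext j k
  by_cases hji : j = i
  · subst hji
    simp [wrefl_apply_self, h]
  · simp [wrefl_apply_of_ne d hd c hji, h]

theorem wrefl_wrefl (i : I) (lam : ∀ j, Fin (d j) → ℂ) :
    wrefl d hd c i (wrefl d hd c i lam) = lam := by
  funext j k
  by_cases hji : j = i
  · subst hji
    simp [wrefl_apply_self]
  · simp [wrefl_apply_of_ne d hd c hji, wrefl_apply_self, sum_neg_distrib]

noncomputable def wreflₗ (i : I) : Module.End ℂ (∀ j, Fin (d j) → ℂ) where
  toFun := wrefl d hd c i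
  map_add' u v := by
    funext j k
    by_cases hji : j = i
    · subst hji
      simp [wrefl_apply_self]; ring
    · simp [wrefl_apply_of_ne d hd c hji, sum_add_distrib]; ring
  map_smul' z u := by
    funext j k
    by_cases hji : j = i
    · subst hji
      simp [wrefl_apply_self]
    · simp [wrefl_apply_of_ne d hd c hji, ← mul_sum]; ring

@[simp]
theorem coe_wreflₗ (i : I) : ⇑(wreflₗ d hd c i) = wrefl d hd c i := rfl

theorem wrefl_apply_wreflIdx {i j : I} (h : j ≠ i) {G : ℕ} (hG : Nat.gcd (d i) (d j) = G)
    {l : ℕ} (hl : l < G) (lam : ∀ j, Fin (d j) → ℂ) :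
    wrefl d hd c i lam j (wreflIdx (hd j) (d j / G) l)
      = lam j (wreflIdx (hd j) (d j / G) l) - c i j * lam i (wreflIdx (hd i) (d i / G) l) := by
  subst hG
  rw [wrefl_apply_of_ne d hd c h, coe_wreflIdx,
    filter_range_sub_one_sub_mul_eq_singleton (Nat.div_mul_cancel (Nat.gcd_dvd_right _ _))
      (Nat.div_gcd_pos_right (hd j)) hl,
    sum_singleton]

theorem wrefl_apply_of_not_dvd {i j : I} (h : j ≠ i) {k : Fin (d j)}
    (hk : ¬ d j / Nat.gcd (d i) (d j) ∣ d j - 1 - k) (lam : ∀ j, Fin (d j) → ℂ) :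
    wrefl d hd c i lam j k = lam j k := by
  rw [wrefl_apply_of_ne d hd c h,
    filter_range_sub_one_sub_mul_eq_empty (Nat.div_mul_cancel (Nat.gcd_dvd_right _ _))
      (Nat.div_gcd_pos_right (hd j)) hk,
    sum_empty, mul_zero, sub_zero]

def matchedCoeffs (i j : I) (l : ℕ) : (∀ k, Fin (d k) → ℂ) →ₗ[ℂ] ℂ × ℂ :=
  (coeffₗ d i (wreflIdx (hd i) (d i / Nat.gcd (d i) (d j)) l)).prod
    (coeffₗ d j (wreflIdx (hd j) (d j / Nat.gcd (d i) (d j)) l))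

theorem matchedCoeffs_comp_wreflₗ_mul {i j : I} (hij : i ≠ j) {l : ℕ}
    (hl : l < Nat.gcd (d i) (d j)) :
    matchedCoeffs d hd i j l ∘ₗ (wreflₗ d hd c i * wreflₗ d hd c j)
      = rankTwoCoxeterElement (c i j) (c j i) ∘ₗ matchedCoeffs d hd i j l := by
  refine LinearMap.ext fun v => Prod.ext ?_ ?_ <;>
    simp [matchedCoeffs, rankTwoCoxeterElement, wrefl_apply_self,
      wrefl_apply_wreflIdx d hd c hij (Nat.gcd_comm _ _) hl,
      wrefl_apply_wreflIdx d hd c hij.symm rfl hl] <;> ring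

theorem wreflₗ_mul_apply_of_not_dvd {i j k : I} (hij : i ≠ j) (hk : k = i ∨ k = j)
    {p : Fin (d k)} (hp : ¬ d k / Nat.gcd (d i) (d j) ∣ d k - 1 - p)
    (v : ∀ k, Fin (d k) → ℂ) :
    (wreflₗ d hd c i * wreflₗ d hd c j) v k p = -v k p := by
  rcases hk with rfl | rfl
  · rw [Nat.gcd_comm] at hp
    simp [wrefl_apply_self, wrefl_apply_of_not_dvd d hd c hij hp]
  · simp [wrefl_apply_self, wrefl_apply_of_not_dvd d hd c hij.symm hp]

theorem geom_sum_wreflₗ_mul_apply_eq_zero {i j k : I} (hij : i ≠ j) {m : ℕ}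
    (hsum : ∑ s ∈ range m, rankTwoCoxeterElement (c i j) (c j i) ^ s = 0)
    (hm : Even m ∨ d i = d j) (hk : k = i ∨ k = j) (p : Fin (d k)) (v : ∀ k, Fin (d k) → ℂ) :
    (∑ s ∈ range m, (wreflₗ d hd c i * wreflₗ d hd c j) ^ s) v k p = 0 := by
  by_cases hp : d k / Nat.gcd (d i) (d j) ∣ d k - 1 - p
  · have hmatched {l : ℕ} (hl : l < Nat.gcd (d i) (d j)) :=
      LinearMap.apply_geom_sum_eq_zero (matchedCoeffs_comp_wreflₗ_mul d hd c hij hl) hsum v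
    rcases hk with rfl | rfl
    · obtain ⟨l, hl, hpl⟩ := Nat.exists_lt_eq_sub_one_sub_mul
        (Nat.div_mul_cancel (Nat.gcd_dvd_left _ _)) p.isLt hp
      obtain rfl : p = wreflIdx (hd k) _ l := Fin.ext hpl
      simpa [matchedCoeffs, Prod.fst_sum] using congrArg Prod.fst (hmatched hl)
    · obtain ⟨l, hl, hpl⟩ := Nat.exists_lt_eq_sub_one_sub_mul
        (Nat.div_mul_cancel (Nat.gcd_dvd_right _ _)) p.isLt hp
      obtain rfl : p = wreflIdx (hd k) _ l := Fin.ext hpl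
      simpa [matchedCoeffs, Prod.snd_sum] using congrArg Prod.snd (hmatched hl)
  · have hm : Even m := hm.resolve_right fun hdij => hp (by
      rcases hk with rfl | rfl <;> simp [hdij, Nat.div_self (hd _)])
    refine LinearMap.apply_geom_sum_eq_zero (f' := -1) (g := coeffₗ d k p) ?_ ?_ v
    · refine LinearMap.ext fun w => ?_
      simpa using wreflₗ_mul_apply_of_not_dvd d hd c hij hk hp w
    · rw [neg_one_geom_sum, if_pos hm]

theorem wreflₗ_mul_pow_eq_one {i j : I} (hij : i ≠ j) {m : ℕ}
    (hsum : ∑ s ∈ range m, rankTwoCoxeterElement (c i j) (c j i) ^ s = 0)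
    (hm : Even m ∨ d i = d j) :
    (wreflₗ d hd c i * wreflₗ d hd c j) ^ m = 1 := by
  refine Module.End.pow_eq_one_of_geom_sum_apply_mem (K := {v | v i = 0 ∧ v j = 0})
    (fun v ⟨hvi, hvj⟩ => by simp [wrefl_eq_self, hvi, hvj]) fun v => ⟨?_, ?_⟩ <;> funext p
  · exact geom_sum_wreflₗ_mul_apply_eq_zero d hd c hij hsum hm (.inl rfl) p v
  · exact geom_sum_wreflₗ_mul_apply_eq_zero d hd c hij hsum hm (.inr rfl) p v

end Reflection

section QuiverCartan

variable {I : Type} {a : I → I → ℕ} {d : I → ℕ} {c : I → I → ℤ}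

theorem cartan_eq_zero_of_mul_eq_zero (hd : ∀ i, 0 < d i) (hsymm : ∀ i j, a i j = a j i)
    (hc : ∀ i j, i ≠ j → c i j = -((a i j * (d j / Nat.gcd (d i) (d j)) : ℕ) : ℤ))
    {i j : I} (hij : i ≠ j) (h : c i j * c j i = 0) : c i j = 0 ∧ c j i = 0 := by
  rw [hc i j hij, hc j i hij.symm, hsymm j i] at h ⊢
  rw [neg_mul_neg, ← Nat.cast_mul, Nat.cast_eq_zero] at h
  have ha : a i j = 0 := by
    simpa [(Nat.div_gcd_pos_right (hd i)).ne', (Nat.div_gcd_pos_right (hd j)).ne'] using h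
  simp [ha]

theorem eq_of_cartan_mul_eq_one
    (hc : ∀ i j, i ≠ j → c i j = -((a i j * (d j / Nat.gcd (d i) (d j)) : ℕ) : ℤ))
    {i j : I} (hij : i ≠ j) (h : c i j * c j i = 1) : d i = d j := by
  rw [hc i j hij, hc j i hij.symm, neg_mul_neg, ← Nat.cast_mul, Nat.cast_eq_one] at h
  have hj := Nat.eq_one_of_mul_eq_one_left (Nat.eq_one_of_mul_eq_one_right h)
  have hi := Nat.eq_one_of_mul_eq_one_left (Nat.eq_one_of_mul_eq_one_left h)
  rw [Nat.gcd_comm] at hi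
  exact (Nat.eq_of_dvd_of_div_eq_one (Nat.gcd_dvd_left _ _) hi).symm.trans
    (Nat.eq_of_dvd_of_div_eq_one (Nat.gcd_dvd_right _ _) hj)

end QuiverCartan

theorem stmt14_general {I : Type} [DecidableEq I]
    (a : I → I → ℕ) (d : I → ℕ) (hd : ∀ i, 0 < d i)
    (hsymm : ∀ i j, a i j = a j i)
    (c : I → I → ℤ)
    (hc : ∀ i j, c i j =
      (if i = j then 2 else 0)
        - (((a i j * (d j / Nat.gcd (d i) (d j))) : ℕ) : ℤ)) :
    (∀ i, wrefl d hd c i ∘ wrefl d hd c i = id)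
    ∧ (∀ i j, i ≠ j → ∀ m : ℕ,
        ((c i j * c j i = 0 ∧ m = 2) ∨ (c i j * c j i = 1 ∧ m = 3)
          ∨ (c i j * c j i = 2 ∧ m = 4) ∨ (c i j * c j i = 3 ∧ m = 6)) →
        (wrefl d hd c i ∘ wrefl d hd c j)^[m] = id) := by
  refine ⟨fun i => funext (wrefl_wrefl d hd c i), fun i j hij m hm => ?_⟩
  have hoff (i j : I) (hij : i ≠ j) :
      c i j = -((a i j * (d j / Nat.gcd (d i) (d j)) : ℕ) : ℤ) := by
    rw [hc, if_neg hij, zero_sub]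
  have hsum : ∑ s ∈ range m, rankTwoCoxeterElement (c i j) (c j i) ^ s = 0 := by
    refine geom_sum_rankTwoCoxeterElement_eq_zero ?_
    rcases hm with ⟨h, rfl⟩ | hm
    · obtain ⟨hcij, hcji⟩ := cartan_eq_zero_of_mul_eq_zero hd hsymm hoff hij h
      exact .inl ⟨hcij, hcji, rfl⟩
    · exact .inr hm
  have hparity : Even m ∨ d i = d j := by
    rcases hm with ⟨-, rfl⟩ | ⟨h, rfl⟩ | ⟨-, rfl⟩ | ⟨-, rfl⟩
    · exact .inl even_two
    · exact .inr (eq_of_cartan_mul_eq_one hoff hij h)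
    · exact .inl (by decide)
    · exact .inl (by decide)
  have hpow := wreflₗ_mul_pow_eq_one d hd c hij hsum hparity
  rw [← coe_wreflₗ d hd c i, ← coe_wreflₗ d hd c j, ← Module.End.coe_mul,
    ← Module.End.coe_pow, hpow, Module.End.coe_one]

/-- the reflections `r_i` satisfy the Coxeter relations of the
Weyl group `W(𝐂)`: `r_i² = Id` and `(r_i r_j)^{m_{ij}} = Id` for `i ≠ j`,
where `m_{ij} = 2, 3, 4, 6` according as `c_{ij}c_{ji} = 0, 1, 2, 3`.  Here
`𝐂` is the symmetrizable GCM of a quiver with multiplicities: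
`c_{ij} = 2δ_{ij} − a_{ij} d_j / d_{ij}`. -/
theorem stmt14 {I : Type} [Fintype I] [DecidableEq I]
    (a : I → I → ℕ) (d : I → ℕ) (hd : ∀ i, 0 < d i)
    (hsymm : ∀ i j, a i j = a j i) (hdiag : ∀ i, a i i = 0)
    (c : I → I → ℤ)
    (hc : ∀ i j, c i j =
      (if i = j then 2 else 0)
        - (((a i j * (d j / Nat.gcd (d i) (d j))) : ℕ) : ℤ)) :
    (∀ i, wrefl d hd c i ∘ wrefl d hd c i = id)
    ∧ (∀ i j, i ≠ j → ∀ m : ℕ,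
        ((c i j * c j i = 0 ∧ m = 2) ∨ (c i j * c j i = 1 ∧ m = 3)
          ∨ (c i j * c j i = 2 ∧ m = 4) ∨ (c i j * c j i = 3 ∧ m = 6)) →
        (wrefl d hd c i ∘ wrefl d hd c j)^[m] = id) :=
  stmt14_general a d hd hsymm c hc
end

section
/- Define ρ : R_𝐝 → ℂ^I by ρ((λ_i)_i) = (λ_{i, d_i−1})_i, the tuple of coefficients of ε_i^{d_i−1} (equivalently the residues res(λ_i dε_i/ε_i^{d_i})). Then for every i ∈ I and λ ∈ R_𝐝, one has ρ(r_i(λ)) = ᵗs_i(ρ(λ)), where s_i is the i-th simple reflection on ℤ^I given by s_i(v) = v − Σ_j c_{ij} v_j e_i and ᵗs_i is its transpose acting on ℂ^I. -/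
open Finset

lemma Nat.sub_one_sub_div_gcd_mul_eq_self_iff {m n l : ℕ} (hn : 0 < n) (hl : l < Nat.gcd m n) :
    n - 1 - n / Nat.gcd m n * l = n - 1 ↔ l = 0 := by
  have hq : 0 < n / Nat.gcd m n :=
    Nat.div_pos (Nat.gcd_le_right m hn) (Nat.gcd_pos_of_pos_right m hn)
  have hbound : n / Nat.gcd m n * (l + 1) ≤ n :=
    calc n / Nat.gcd m n * (l + 1) ≤ n / Nat.gcd m n * Nat.gcd m n := Nat.mul_le_mul_left _ hl
      _ = n := Nat.div_mul_cancel (Nat.gcd_dvd_right m n)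
  constructor
  · intro h
    by_contra hl0
    have : 1 ≤ n / Nat.gcd m n * l := Nat.one_le_iff_ne_zero.mpr (mul_ne_zero hq.ne' hl0)
    rw [mul_add_one] at hbound
    omega
  · rintro rfl
    simp

section wrefl

variable {I : Type} [DecidableEq I] (d : I → ℕ) (hd : ∀ i, 0 < d i) (c : I → I → ℤ) (i : I)
  (lam : ∀ j, Fin (d j) → ℂ)

lemma wrefl_self (k : Fin (d i)) : wrefl d hd c i lam i k = -lam i k :=
  if_pos rfl

/-- Only the term `l = 0` of the sum defining `r_i` reaches the top coefficient `ε_j^{d_j - 1}`. -/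
lemma wrefl_apply_top_of_ne {j : I} (hji : j ≠ i) :
    wrefl d hd c i lam j ⟨d j - 1, Nat.sub_one_lt (hd j).ne'⟩
      = lam j ⟨d j - 1, Nat.sub_one_lt (hd j).ne'⟩
        - c i j * lam i ⟨d i - 1, Nat.sub_one_lt (hd i).ne'⟩ := by
  rw [wrefl, if_neg hji, Finset.sum_eq_single_of_mem 0
    (Finset.mem_range.mpr (Nat.gcd_pos_of_pos_left _ (hd i)))]
  · simp
  · intro l hl hl0
    have hk := (Nat.sub_one_sub_div_gcd_mul_eq_self_iff (hd j) (Finset.mem_range.mp hl)).not.mpr hl0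
    exact if_neg (Ne.symm hk)

end wrefl

/-- the residue map `ρ(λ)_j = λ_{j,d_j−1}` intertwines `r_i`
with the transposed simple reflection: `ρ(r_i(λ))_j = ρ(λ)_j − c_{ij} ρ(λ)_i`,
i.e. `ρ ∘ r_i = ᵗs_i ∘ ρ`. -/
theorem stmt15 {I : Type} [DecidableEq I]
    (a : I → I → ℕ) (d : I → ℕ) (hd : ∀ i, 0 < d i)
    (hdiag : ∀ i, a i i = 0)
    (c : I → I → ℤ)
    (hc : ∀ i j, c i j =
      (if i = j then 2 else 0)
        - (((a i j * (d j / Nat.gcd (d i) (d j))) : ℕ) : ℤ)) :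
    ∀ (i : I) (lam : ∀ j, Fin (d j) → ℂ) (j : I),
      wrefl d hd c i lam j ⟨d j - 1, by have := hd j; omega⟩
        = lam j ⟨d j - 1, by have := hd j; omega⟩
          - (c i j : ℂ) * lam i ⟨d i - 1, by have := hd i; omega⟩ := by
  intro i lam j
  rcases eq_or_ne j i with rfl | hji
  · have hcjj : c j j = 2 := by simp [hc j j, hdiag]
    rw [wrefl_self, hcjj]
    push_cast
    ring
  · exact wrefl_apply_top_of_ne d hd c i lam hji
end

section
/- Let (𝖰,𝐝) be a quiver with multiplicities having an irregular leg 0,1,…,l as in the regularization setup (d_0 = 1, d_i = d > 1 for i ∈ [1,l]), with GCM 𝐂 and symmetrizer D, and let (𝖰̌,𝐝̌) be its regularization with GCM 𝐂̌ and symmetrizer Ď. Define φ : ℤ^I → ℤ^I by φ(v)_i = v_i − v_{i+1} for i ∈ [0,l-1] and φ(v)_i = v_i otherwise. Then ᵗφ Ď 𝐂̌ φ = D 𝐂, i.e. φ is an isometry from (ℤ^I, ᵗv D𝐂 w) to (ℤ^I, ᵗv Ď𝐂̌ w). -/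
/-!
Off the diagonal the symmetrized Cartan matrix `D𝐂` has entries `-a_{xy} lcm(d_x, d_y)`, so both
forms split into blocks along `I = [0, l] ⊔ K`, and the `K × K` blocks agree. On the leg,
`Ď𝐂̌ = d·Id - (d - 2)·J` with `J` the all-ones matrix; since `∑ᵢ φ(v)ᵢ = v₀` telescopes and
`∑ᵢ φ(v)ᵢ φ(w)ᵢ = 2 ∑ᵢ vᵢ wᵢ - v₀ w₀ - ∑ᵢ (vᵢ wᵢ₊₁ + vᵢ₊₁ wᵢ)`, its form in `φ v, φ w` is the form
of the path `1 - d - ⋯ - d` with all lcm's equal to `d`. The mixed blocks see only `v₀` on the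
original side (edges to `K` leave the leg at `0`) and `∑ᵢ φ(v)ᵢ = v₀` on the regularized side.
-/

open Finset

section SymmCartan

variable {I : Type*} [DecidableEq I]

/-- The entry `(D𝐂)_{xy}` of the symmetrized generalized Cartan matrix. -/
def symmCartan (d : I → ℕ) (a : I → I → ℕ) (x y : I) : ℚ :=
  d x * ((if x = y then 2 else 0) - (a x y : ℚ) / (Nat.gcd (d x) (d y) : ℚ) * d y)

variable {d : I → ℕ} {a : I → I → ℕ}

theorem symmCartan_of_ne {x y : I} (hxy : x ≠ y) :
    symmCartan d a x y = -(a x y * Nat.lcm (d x) (d y) : ℕ) := by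
  rcases Nat.eq_zero_or_pos (Nat.gcd (d x) (d y)) with h | h
  · obtain ⟨hx, hy⟩ := Nat.gcd_eq_zero_iff.mp h
    simp [symmCartan, hx, hy]
  · have hlcm : (Nat.gcd (d x) (d y) : ℚ) * Nat.lcm (d x) (d y) = d x * d y := by
      exact_mod_cast Nat.gcd_mul_lcm (d x) (d y)
    simp only [symmCartan, if_neg hxy, Nat.cast_mul]
    field_simp
    linear_combination (a x y : ℚ) * hlcm

theorem symmCartan_self {x : I} (hx : a x x = 0) : symmCartan d a x x = 2 * d x := by
  simp [symmCartan, hx, mul_comm]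

theorem symmCartan_eq {x : I} (hx : a x x = 0) (y : I) :
    symmCartan d a x y = (if x = y then 2 * d x else 0) - (a x y * Nat.lcm (d x) (d y) : ℕ) := by
  by_cases hxy : x = y
  · subst hxy
    simp [symmCartan_self hx, hx]
  · simp [symmCartan_of_ne hxy, hxy]

theorem symmCartan_comm (ha : ∀ x y, a x y = a y x) (x y : I) :
    symmCartan d a x y = symmCartan d a y x := by
  by_cases hxy : x = y
  · rw [hxy]
  · rw [symmCartan_of_ne hxy, symmCartan_of_ne (Ne.symm hxy), ha, Nat.lcm_comm]

theorem sum_sum_mul_symmCartan [Fintype I] (v w : I → ℚ) :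
    ∑ x, ∑ y, v x * d x *
        ((if x = y then 2 else 0) - (a x y : ℚ) / (Nat.gcd (d x) (d y) : ℚ) * d y) * w y
      = ∑ x, ∑ y, v x * w y * symmCartan d a x y := by
  simp only [symmCartan]
  exact sum_congr rfl fun x _ => sum_congr rfl fun y _ => by ring

end SymmCartan

section Path

variable {n : ℕ}

theorem Fin.sum_eq_apply_zero_of_eq_sub_succ {M : Type*} [AddCommGroup M] {u v : Fin (n + 1) → M}
    (h : ∀ i : Fin n, u i.castSucc = v i.castSucc - v i.succ)
    (hlast : u (Fin.last n) = v (Fin.last n)) :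
    ∑ i, u i = v 0 := by
  rw [Fin.sum_univ_castSucc, hlast]
  simp only [h, sum_sub_distrib]
  rw [sub_add_eq_add_sub, sub_eq_iff_eq_add, ← Fin.sum_univ_castSucc, Fin.sum_univ_succ]

theorem Fin.sum_mul_eq_of_eq_sub_succ {R : Type*} [CommRing R] {u v u' v' : Fin (n + 1) → R}
    (h : ∀ i : Fin n, u i.castSucc = v i.castSucc - v i.succ)
    (hlast : u (Fin.last n) = v (Fin.last n))
    (h' : ∀ i : Fin n, u' i.castSucc = v' i.castSucc - v' i.succ)
    (hlast' : u' (Fin.last n) = v' (Fin.last n)) :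
    ∑ i, u i * u' i = 2 * ∑ i, v i * v' i - v 0 * v' 0
      - ∑ i : Fin n, (v i.castSucc * v' i.succ + v i.succ * v' i.castSucc) := by
  have h₁ := Fin.sum_univ_castSucc fun i => v i * v' i
  have h₂ := Fin.sum_univ_succ fun i => v i * v' i
  rw [Fin.sum_univ_castSucc, hlast, hlast']
  simp only [h, h']
  have hexp : ∀ i : Fin n, (v i.castSucc - v i.succ) * (v' i.castSucc - v' i.succ)
      = v i.castSucc * v' i.castSucc + v i.succ * v' i.succ
        - (v i.castSucc * v' i.succ + v i.succ * v' i.castSucc) := fun i => by ring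
  simp only [hexp, sum_sub_distrib, sum_add_distrib]
  linear_combination -(h₁ + h₂)

theorem Fin.sum_sum_ite_val_add_one_eq {M : Type*} [AddCommMonoid M]
    (f : Fin (n + 1) → Fin (n + 1) → M) :
    ∑ i : Fin (n + 1), ∑ j : Fin (n + 1), (if (i : ℕ) + 1 = (j : ℕ) then f i j else 0)
      = ∑ i : Fin n, f i.castSucc i.succ := by
  rw [Fin.sum_univ_castSucc, sum_eq_zero fun j _ => if_neg (by simp; omega), add_zero]
  refine sum_congr rfl fun i _ => ?_
  rw [Fintype.sum_eq_single i.succ fun j hj => if_neg ?_, if_pos (by simp)]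
  contrapose! hj
  ext
  simp [← hj]

theorem Fin.sum_sum_ite_adjacent_eq {M : Type*} [AddCommMonoid M]
    (f : Fin (n + 1) → Fin (n + 1) → M) :
    ∑ i : Fin (n + 1), ∑ j : Fin (n + 1),
      (if (i : ℕ) + 1 = (j : ℕ) ∨ (j : ℕ) + 1 = (i : ℕ) then f i j else 0)
      = ∑ i : Fin n, (f i.castSucc i.succ + f i.succ i.castSucc) := by
  have hsplit : ∀ i j : Fin (n + 1),
      (if (i : ℕ) + 1 = j ∨ (j : ℕ) + 1 = i then f i j else 0)
        = (if (i : ℕ) + 1 = j then f i j else 0) + (if (j : ℕ) + 1 = i then f i j else 0) := by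
    intro i j
    split_ifs <;> first | omega | simp
  simp only [hsplit, sum_add_distrib]
  rw [Fin.sum_sum_ite_val_add_one_eq, sum_comm, Fin.sum_sum_ite_val_add_one_eq]

end Path

theorem sum_sum_mul_ite_sub {ι : Type*} [Fintype ι] [DecidableEq ι] (u u' : ι → ℚ) (c e : ℚ) :
    ∑ i, ∑ j, u i * u' j * ((if i = j then c else 0) - e)
      = c * ∑ i, u i * u' i - e * ((∑ i, u i) * ∑ j, u' j) := by
  have hentry : ∀ i j, u i * u' j * ((if i = j then c else 0) - e)
      = (if i = j then c * (u i * u' j) else 0) - e * (u i * u' j) := by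
    intro i j
    split_ifs <;> ring
  simp only [hentry, sum_sub_distrib, sum_ite_eq, mem_univ, if_true, ← mul_sum, sum_mul_sum]

section Blocks

variable {α β : Type*} [Fintype α] [DecidableEq α] [DecidableEq β]
  {d : α ⊕ β → ℕ} {a : α ⊕ β → α ⊕ β → ℕ}

theorem sum_sum_symmCartan_inl_inl_of_complete {m : ℕ} (hm : 2 ≤ m)
    (hd : ∀ i, d (.inl i) = 1) (ha : ∀ i j, a (.inl i) (.inl j) = if i = j then 0 else m - 2)
    (u u' : α → ℚ) :
    ∑ i, ∑ j, u i * u' j * symmCartan d a (.inl i) (.inl j)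
      = m * ∑ i, u i * u' i - (m - 2) * ((∑ i, u i) * ∑ j, u' j) := by
  have hentry : ∀ i j,
      symmCartan d a (.inl i) (.inl j) = (if i = j then (m : ℚ) else 0) - (m - 2) := by
    intro i j
    by_cases hij : i = j
    · simp [hij, symmCartan_self (by simp [ha] : a (.inl j) (.inl j) = 0), hd]
    · rw [symmCartan_of_ne (by simpa using hij), ha, hd, hd]
      simp [hij, Nat.cast_sub hm]
  simp only [hentry]
  exact sum_sum_mul_ite_sub u u' _ _

theorem sum_sum_symmCartan_inl_inr_of_forall [Fintype β] {b : β → ℕ}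
    (hd : ∀ i, d (.inl i) = 1) (ha : ∀ i k, a (.inl i) (.inr k) = b k) (u : α → ℚ) (w : β → ℚ) :
    ∑ i, ∑ k, u i * w k * symmCartan d a (.inl i) (.inr k)
      = -((∑ i, u i) * ∑ k, (b k * d (.inr k) : ℕ) * w k) := by
  simp only [symmCartan_of_ne Sum.inl_ne_inr, ha, hd, Nat.lcm_one_left, sum_mul_sum,
    ← sum_neg_distrib]
  exact sum_congr rfl fun i _ => sum_congr rfl fun k _ => by ring

theorem sum_sum_symmCartan_inl_inr_of_single [Fintype β] {i₀ : α}
    (hd : d (.inl i₀) = 1) (ha : ∀ i k, i ≠ i₀ → a (.inl i) (.inr k) = 0)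
    (v : α → ℚ) (w : β → ℚ) :
    ∑ i, ∑ k, v i * w k * symmCartan d a (.inl i) (.inr k)
      = -(v i₀ * ∑ k, (a (.inl i₀) (.inr k) * d (.inr k) : ℕ) * w k) := by
  rw [Fintype.sum_eq_single i₀ fun i hi => sum_eq_zero fun k _ => by
    simp [symmCartan_of_ne Sum.inl_ne_inr, ha i k hi]]
  simp only [symmCartan_of_ne Sum.inl_ne_inr, hd, Nat.lcm_one_left, mul_sum, ← sum_neg_distrib]
  exact sum_congr rfl fun k _ => by ring

theorem sum_sum_symmCartan_inr_inl [Fintype β] (ha : ∀ x y, a x y = a y x)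
    (v : β → ℚ) (w : α → ℚ) :
    ∑ k, ∑ i, v k * w i * symmCartan d a (.inr k) (.inl i)
      = ∑ i, ∑ k, w i * v k * symmCartan d a (.inl i) (.inr k) := by
  rw [sum_comm]
  exact sum_congr rfl fun i _ => sum_congr rfl fun k _ => by
    rw [symmCartan_comm ha, mul_comm (v k)]

end Blocks

theorem Fin.sum_sum_symmCartan_inl_inl_of_path {β : Type*} [DecidableEq β] {n dd : ℕ}
    {d : Fin (n + 1) ⊕ β → ℕ} {a : Fin (n + 1) ⊕ β → Fin (n + 1) ⊕ β → ℕ}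
    (hd0 : d (.inl 0) = 1) (hd : ∀ i, i ≠ 0 → d (.inl i) = dd)
    (ha : ∀ i j : Fin (n + 1), a (.inl i) (.inl j)
      = if (i : ℕ) + 1 = (j : ℕ) ∨ (j : ℕ) + 1 = (i : ℕ) then 1 else 0)
    (v w : Fin (n + 1) → ℚ) :
    ∑ i, ∑ j, v i * w j * symmCartan d a (.inl i) (.inl j)
      = 2 * dd * ∑ i, v i * w i - (2 * dd - 2) * (v 0 * w 0)
        - dd * ∑ i : Fin n, (v i.castSucc * w i.succ + v i.succ * w i.castSucc) := by
  have hlcm : ∀ i j, i ≠ j → Nat.lcm (d (.inl i)) (d (.inl j)) = dd := by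
    intro i j hij
    rcases eq_or_ne i 0 with rfl | hi
    · rw [hd0, hd j hij.symm, Nat.lcm_one_left]
    rcases eq_or_ne j 0 with rfl | hj
    · rw [hd0, hd i hi, Nat.lcm_one_right]
    · rw [hd i hi, hd j hj, Nat.lcm_self]
  have hentry : ∀ i j, v i * w j * symmCartan d a (.inl i) (.inl j)
      = (if i = j then 2 * (d (.inl i) * (v i * w j)) else 0)
        - dd * (if (i : ℕ) + 1 = (j : ℕ) ∨ (j : ℕ) + 1 = (i : ℕ) then v i * w j else 0) := by
    intro i j
    rw [symmCartan_eq (by simp [ha])]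
    by_cases hij : i = j
    · subst hij
      rw [if_pos rfl, if_pos rfl, ha, if_neg (by omega), if_neg (by omega)]
      push_cast
      ring
    · simp only [hij, Sum.inl.injEq, if_false, hlcm i j hij, ha]
      split_ifs <;> push_cast <;> ring
  have hdiag : ∑ i, (d (.inl i) : ℚ) * (v i * w i)
      = dd * ∑ i, v i * w i - (dd - 1) * (v 0 * w 0) := by
    rw [Fin.sum_univ_succ, Fin.sum_univ_succ (fun i => v i * w i), hd0]
    simp only [hd _ (Fin.succ_ne_zero _), ← mul_sum]
    push_cast
    ring
  simp only [hentry, sum_sub_distrib, sum_ite_eq, mem_univ, if_true, ← mul_sum,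
    Fin.sum_sum_ite_adjacent_eq (fun i j => v i * w j)]
  linear_combination 2 * hdiag

/-- regularization gives an isometry of root lattices.  The
vertex set is `I = Fin (l+1) ⊕ K`, with `inl 0, inl 1, …, inl l` the irregular
leg: `d(inl 0) = 1`, `d(inl i) = dd > 1` for `i ∈ [1,l]`; within `[0,l]`
consecutive vertices are joined by exactly one edge and there are no other
edges touching `[1,l]`.  `(ǎ, ď)` is the regularization: leg multiplicities
become `1`, leg edges are replaced by `dd − 2` edges between each pair of
distinct leg vertices, and every edge joining `k ∈ K` with the base `inl 0`
is duplicated at each leg vertex.  With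
`φ(v)_{inl i} = v_{inl i} − v_{inl (i+1)}` for `i < l` and `φ(v)_x = v_x`
otherwise, one has `ᵗφ Ď 𝐂̌ φ = D 𝐂`, i.e. `φ` is an isometry for the forms
`ᵗv D 𝐂 w` and `ᵗv Ď 𝐂̌ w`, where `𝐂 = 2·Id − 𝐀′D`,
`𝐀′ = (a_{xy}/gcd(d_x,d_y))`, and similarly for `𝐂̌`. -/
theorem stmt18 {K : Type} [Fintype K] [DecidableEq K] (l : ℕ)
    (dd : ℕ) (hdd : 1 < dd)
    (d dc : (Fin (l + 1) ⊕ K) → ℕ)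
    (a ac : (Fin (l + 1) ⊕ K) → (Fin (l + 1) ⊕ K) → ℕ)
    (hd0 : d (Sum.inl 0) = 1)
    (hdleg : ∀ i : Fin (l + 1), i ≠ 0 → d (Sum.inl i) = dd)
    (ha_symm : ∀ x y, a x y = a y x)
    (ha_leg : ∀ i j : Fin (l + 1),
      a (Sum.inl i) (Sum.inl j)
        = if (i : ℕ) + 1 = (j : ℕ) ∨ (j : ℕ) + 1 = (i : ℕ) then 1 else 0)
    (ha_K : ∀ (i : Fin (l + 1)) (k : K), i ≠ 0 → a (Sum.inl i) (Sum.inr k) = 0)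
    (hdc_leg : ∀ i : Fin (l + 1), dc (Sum.inl i) = 1)
    (hdc_K : ∀ k, dc (Sum.inr k) = d (Sum.inr k))
    (hac_symm : ∀ x y, ac x y = ac y x)
    (hac_leg : ∀ i j : Fin (l + 1),
      ac (Sum.inl i) (Sum.inl j) = if i = j then 0 else dd - 2)
    (hac_K : ∀ (i : Fin (l + 1)) (k : K),
      ac (Sum.inl i) (Sum.inr k) = a (Sum.inl 0) (Sum.inr k))
    (hac_KK : ∀ k k', ac (Sum.inr k) (Sum.inr k') = a (Sum.inr k) (Sum.inr k'))
    (φ : ((Fin (l + 1) ⊕ K) → ℚ) → ((Fin (l + 1) ⊕ K) → ℚ))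
    (hφ_leg : ∀ (v : (Fin (l + 1) ⊕ K) → ℚ) (i : ℕ) (hi : i < l),
      φ v (Sum.inl ⟨i, by omega⟩)
        = v (Sum.inl ⟨i, by omega⟩) - v (Sum.inl ⟨i + 1, by omega⟩))
    (hφ_last : ∀ v : (Fin (l + 1) ⊕ K) → ℚ,
      φ v (Sum.inl ⟨l, by omega⟩) = v (Sum.inl ⟨l, by omega⟩))
    (hφ_K : ∀ (v : (Fin (l + 1) ⊕ K) → ℚ) (k : K),
      φ v (Sum.inr k) = v (Sum.inr k)) :
    ∀ v w : (Fin (l + 1) ⊕ K) → ℚ,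
      (∑ x, ∑ y, φ v x * dc x *
          ((if x = y then 2 else 0)
            - (ac x y : ℚ) / (Nat.gcd (dc x) (dc y) : ℚ) * dc y) * φ w y)
      = ∑ x, ∑ y, v x * d x *
          ((if x = y then 2 else 0)
            - (a x y : ℚ) / (Nat.gcd (d x) (d y) : ℚ) * d y) * w y := by
  intro v w
  have hsum (u : (Fin (l + 1) ⊕ K) → ℚ) : ∑ i, φ u (.inl i) = u (.inl 0) :=
    Fin.sum_eq_apply_zero_of_eq_sub_succ (v := fun i => u (.inl i))
      (fun i => hφ_leg u i i.isLt) (hφ_last u)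
  have hsum_mul : ∑ i, φ v (.inl i) * φ w (.inl i) = 2 * ∑ i, v (.inl i) * w (.inl i)
      - v (.inl 0) * w (.inl 0)
      - ∑ i : Fin l,
          (v (.inl i.castSucc) * w (.inl i.succ) + v (.inl i.succ) * w (.inl i.castSucc)) :=
    Fin.sum_mul_eq_of_eq_sub_succ (v := fun i => v (.inl i)) (v' := fun i => w (.inl i))
      (fun i => hφ_leg v i i.isLt) (hφ_last v) (fun i => hφ_leg w i i.isLt) (hφ_last w)
  have hKK : ∀ k k', φ v (.inr k) * φ w (.inr k') * symmCartan dc ac (.inr k) (.inr k')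
      = v (.inr k) * w (.inr k') * symmCartan d a (.inr k) (.inr k') := by
    intro k k'
    simp only [symmCartan, hφ_K, hdc_K, hac_KK, Sum.inr.injEq]
  rw [sum_sum_mul_symmCartan, sum_sum_mul_symmCartan]
  simp only [Fintype.sum_sum_type, sum_add_distrib, hKK]
  rw [sum_sum_symmCartan_inl_inl_of_complete hdd hdc_leg hac_leg,
    sum_sum_symmCartan_inr_inl hac_symm, sum_sum_symmCartan_inr_inl ha_symm,
    sum_sum_symmCartan_inl_inr_of_forall hdc_leg hac_K,
    sum_sum_symmCartan_inl_inr_of_forall hdc_leg hac_K,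
    sum_sum_symmCartan_inl_inr_of_single hd0 ha_K, sum_sum_symmCartan_inl_inr_of_single hd0 ha_K,
    Fin.sum_sum_symmCartan_inl_inl_of_path hd0 hdleg ha_leg, hsum_mul, hsum, hsum]
  simp only [hφ_K, hdc_K]
  ring
end
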